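/- (Slab estimate.) Let n ≥ 2, α > 0 and q < α/(n+α). Then the (n−1)-dimensional integral C := ∫_{ℝ^{n−1}} max(1 − (q/α)|y|^α, 0)^{1/q − n/α − 1} dy (with integrand exp(−|y|^α/α) when q = 0) is finite, and for every unit vector v ∈ ℝⁿ and every h > 0, the slab W = {x ∈ ℝⁿ : |⟨x,v⟩| ≤ h} satisfies G_{α,q}(W) ≤ 2·C·h / Z(α,q). In particular, G_{α,q}(W) → 0 as h → 0⁺. -/

import Mathlib

open MeasureTheory Real Filter
open scoped Pointwise RealInnerProductSpace

/-- The (unnormalized) radial profile of the generalized Gaussian density in dimension `n`: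
`r ↦ max(1 − (q/α) r^α, 0)^(1/q − n/α − 1)` for `q ≠ 0` and `r ↦ exp(−r^α/α)` for `q = 0`. -/
noncomputable def gProfile (n : ℕ) (α q r : ℝ) : ℝ :=
  if q = 0 then Real.exp (-(r ^ α) / α)
  else (max (1 - q / α * r ^ α) 0) ^ (1 / q - (n : ℝ) / α - 1)

/-- The partition function `Z(α,q)`, i.e. the normalizing constant making the generalized
Gaussian density a probability density. -/
noncomputable def Zconst (n : ℕ) (α q : ℝ) : ℝ :=
  ∫ x : EuclideanSpace ℝ (Fin n), gProfile n α q ‖x‖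

/-- The generalized Gaussian density `g_{α,q}` on `ℝⁿ`. -/
noncomputable def gGauss (n : ℕ) (α q : ℝ) (x : EuclideanSpace ℝ (Fin n)) : ℝ :=
  (Zconst n α q)⁻¹ * gProfile n α q ‖x‖

/-- The generalized Gaussian volume `G_{α,q}(K) = ∫_K g_{α,q}(x) dx`. -/
noncomputable def Ggen (n : ℕ) (α q : ℝ) (K : Set (EuclideanSpace ℝ (Fin n))) : ℝ :=
  ∫ x in K, gGauss n α q x

/-! Complete the unit vector `v` to an orthonormal basis: reading off the coordinate along `v`
and the remaining `n - 1` coordinates is a measure-preserving identification of `ℝⁿ` with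
`ℝ × ℝⁿ⁻¹` under which the norm of the second component is at most `‖x‖`. Since the radial profile
is nonincreasing, Tonelli bounds the mass of the slab by `∫_{-h}^{h} C dt = 2 h C`.
The constant `C` is finite because for `q > 0` the profile has compact support, for `q < 0` it is
`(1 + c r^α)^e` with `α e < -(n - 1)`, and for `q = 0` the inequality `1 + t ≤ exp t` dominates
it by such a power. -/

lemma gProfile_nonneg (n : ℕ) (α q r : ℝ) : 0 ≤ gProfile n α q r := by
  unfold gProfile
  split_ifs
  exacts [(exp_pos _).le, rpow_nonneg (le_max_right _ _) _]

lemma measurable_gProfile (n : ℕ) (α q : ℝ) : Measurable (gProfile n α q) := by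
  unfold gProfile
  split_ifs <;> fun_prop

lemma gProfile_exponent_pos {n : ℕ} {α q : ℝ} (hα : 0 < α) (hq0 : 0 < q)
    (hq : q < α / (n + α)) : 0 < 1 / q - n / α - 1 := by
  have hqα : q * (n + α) < α := (lt_div_iff₀ (by positivity)).mp hq
  have : 1 / q - n / α - 1 = (α - q * (n + α)) / (q * α) := by field_simp; ring
  rw [this]
  exact div_pos (by linarith) (by positivity)

lemma gProfile_exponent_neg (n : ℕ) {α q : ℝ} (hα : 0 < α) (hq0 : q < 0) :
    1 / q - n / α - 1 < 0 := by
  have : 1 / q < 0 := one_div_neg.mpr hq0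
  have : 0 ≤ (n : ℝ) / α := by positivity
  linarith

lemma gProfile_antitoneOn {n : ℕ} {α q : ℝ} (hα : 0 < α) (hq : q < α / (n + α)) :
    AntitoneOn (gProfile n α q) (Set.Ici 0) := by
  intro r (hr : 0 ≤ r) s _ hrs
  have hrs' : r ^ α ≤ s ^ α := rpow_le_rpow hr hrs hα.le
  have : 0 ≤ r ^ α := rpow_nonneg hr α
  unfold gProfile
  split_ifs with hq0
  · gcongr
  rcases lt_or_gt_of_ne hq0 with hq0 | hq0
  · have : q / α < 0 := div_neg_of_neg_of_pos hq0 hα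
    rw [max_eq_left (by nlinarith), max_eq_left (by nlinarith)]
    exact rpow_le_rpow_of_nonpos (by nlinarith) (by nlinarith)
      (gProfile_exponent_neg n hα hq0).le
  · have : 0 < q / α := div_pos hq0 hα
    have := (gProfile_exponent_pos hα hq0 hq).le
    gcongr

lemma one_add_rpow_le_two_rpow_mul {α r : ℝ} (hα : 0 < α) (hr : 0 ≤ r) :
    (1 + r) ^ α ≤ 2 ^ α * (1 + r ^ α) := by
  have hmax : max 1 r ^ α ≤ 1 + r ^ α := by
    rcases le_total r 1 with h | h
    · rw [max_eq_left h, one_rpow]; linarith [rpow_nonneg hr α]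
    · rw [max_eq_right h]; linarith
  calc (1 + r) ^ α ≤ (2 * max 1 r) ^ α := by
        gcongr; linarith [le_max_left 1 r, le_max_right 1 r]
    _ = 2 ^ α * max 1 r ^ α := mul_rpow zero_le_two (by positivity)
    _ ≤ 2 ^ α * (1 + r ^ α) := by gcongr

lemma one_add_mul_rpow_rpow_le {α c e r : ℝ} (hα : 0 < α) (hc : 0 < c) (he : e ≤ 0)
    (hr : 0 ≤ r) :
    (1 + c * r ^ α) ^ e ≤ (min 1 c / 2 ^ α) ^ e * (1 + r) ^ (α * e) := by
  have hmin : 0 < min 1 c := lt_min zero_lt_one hc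
  have hlow : min 1 c / 2 ^ α * (1 + r) ^ α ≤ 1 + c * r ^ α :=
    calc min 1 c / 2 ^ α * (1 + r) ^ α ≤ min 1 c / 2 ^ α * (2 ^ α * (1 + r ^ α)) := by
          gcongr; exact one_add_rpow_le_two_rpow_mul hα hr
      _ = min 1 c + min 1 c * r ^ α := by field_simp
      _ ≤ 1 + c * r ^ α := by
          gcongr
          exacts [min_le_left 1 c, min_le_right 1 c]
  calc (1 + c * r ^ α) ^ e ≤ (min 1 c / 2 ^ α * (1 + r) ^ α) ^ e :=
        rpow_le_rpow_of_nonpos (by positivity) hlow he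
    _ = (min 1 c / 2 ^ α) ^ e * (1 + r) ^ (α * e) := by
        rw [mul_rpow (by positivity) (by positivity), rpow_mul (by positivity)]

lemma integrable_one_add_mul_rpow_norm (m : ℕ) {α c e : ℝ} (hα : 0 < α) (hc : 0 < c)
    (he : m < α * -e) :
    Integrable fun y : EuclideanSpace ℝ (Fin m) => (1 + c * ‖y‖ ^ α) ^ e := by
  have he0 : e ≤ 0 := by nlinarith [(m.cast_nonneg : (0 : ℝ) ≤ m)]
  have hdom := (integrable_one_add_norm (E := EuclideanSpace ℝ (Fin m)) (μ := volume)
    (r := α * -e) (by simpa using he)).const_mul ((min 1 c / 2 ^ α) ^ e)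
  refine hdom.mono' (by fun_prop : Measurable _).aestronglyMeasurable
    (Eventually.of_forall fun y => ?_)
  rw [norm_of_nonneg (by positivity), ← mul_neg, neg_neg]
  exact one_add_mul_rpow_rpow_le hα hc he0 (norm_nonneg y)

lemma exp_neg_le_one_add_div_rpow_neg {s x : ℝ} (hs : 0 < s) (hx : 0 ≤ x) :
    exp (-x) ≤ (1 + x / s) ^ (-s) := by
  rw [rpow_neg (by positivity), exp_neg]
  refine inv_anti₀ (by positivity) ?_
  calc (1 + x / s) ^ s ≤ exp (x / s) ^ s := by
        gcongr; linarith [add_one_le_exp (x / s)]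
    _ = exp x := by rw [← exp_mul, div_mul_cancel₀ _ hs.ne']

lemma integrable_gProfile_of_neg {n m : ℕ} {α q : ℝ} (hα : 0 < α) (hq0 : q < 0) (hmn : m ≤ n) :
    Integrable fun y : EuclideanSpace ℝ (Fin m) => gProfile n α q ‖y‖ := by
  have hqα : q / α < 0 := div_neg_of_neg_of_pos hq0 hα
  have hprofile : (fun y : EuclideanSpace ℝ (Fin m) => gProfile n α q ‖y‖) =
      fun y => (1 + -(q / α) * ‖y‖ ^ α) ^ (1 / q - n / α - 1) := by
    ext y
    have : q / α * ‖y‖ ^ α ≤ 0 := mul_nonpos_of_nonpos_of_nonneg hqα.le (by positivity)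
    rw [gProfile, if_neg hq0.ne, max_eq_left (by linarith), neg_mul, ← sub_eq_add_neg]
  rw [hprofile]
  refine integrable_one_add_mul_rpow_norm m hα (neg_pos.mpr hqα) ?_
  have : α * -(1 / q - n / α - 1) = -(α / q) + n + α := by field_simp; ring
  have : α / q < 0 := div_neg_of_pos_of_neg hα hq0
  have : (m : ℝ) ≤ n := by exact_mod_cast hmn
  linarith

lemma integrable_gProfile_zero (n m : ℕ) {α : ℝ} (hα : 0 < α) :
    Integrable fun y : EuclideanSpace ℝ (Fin m) => gProfile n α 0 ‖y‖ := by
  have hs : 0 < (m + 1 : ℝ) / α := by positivity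
  refine (integrable_one_add_mul_rpow_norm m (c := ((m : ℝ) + 1)⁻¹) hα (by positivity)
    (e := -((m + 1) / α)) (by rw [neg_neg, mul_div_cancel₀ _ hα.ne']; linarith)).mono'
    (measurable_gProfile n α 0 |>.comp measurable_norm).aestronglyMeasurable
    (Eventually.of_forall fun y => ?_)
  rw [norm_of_nonneg (gProfile_nonneg ..), gProfile, if_pos rfl, neg_div]
  convert exp_neg_le_one_add_div_rpow_neg hs (x := ‖y‖ ^ α / α) (by positivity) using 3
  field_simp

lemma integrable_gProfile_of_pos {n m : ℕ} {α q : ℝ} (hα : 0 < α) (hq0 : 0 < q)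
    (hq : q < α / (n + α)) :
    Integrable fun y : EuclideanSpace ℝ (Fin m) => gProfile n α q ‖y‖ := by
  have he := gProfile_exponent_pos hα hq0 hq
  have hcont : Continuous fun y : EuclideanSpace ℝ (Fin m) => gProfile n α q ‖y‖ := by
    simp only [gProfile, if_neg hq0.ne']
    fun_prop (disch := positivity)
  refine hcont.integrable_of_hasCompactSupport
    (HasCompactSupport.intro (isCompact_closedBall 0 ((α / q) ^ α⁻¹)) fun y hy => ?_)
  have hy : α / q < ‖y‖ ^ α := by
    rw [Metric.mem_closedBall, dist_zero_right, not_le,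
      rpow_inv_lt_iff_of_pos (by positivity) (norm_nonneg y) hα] at hy
    exact hy
  have : 1 - q / α * ‖y‖ ^ α ≤ 0 := by
    rw [div_lt_iff₀ hq0] at hy
    rw [div_mul_eq_mul_div, sub_nonpos, le_div_iff₀ hα]
    linarith
  rw [gProfile, if_neg hq0.ne', max_eq_right this, zero_rpow he.ne']

lemma integrable_gProfile {n m : ℕ} {α q : ℝ} (hα : 0 < α) (hq : q < α / (n + α))
    (hmn : m ≤ n) :
    Integrable fun y : EuclideanSpace ℝ (Fin m) => gProfile n α q ‖y‖ := by
  rcases lt_trichotomy q 0 with hq0 | rfl | hq0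
  exacts [integrable_gProfile_of_neg hα hq0 hmn, integrable_gProfile_zero n m hα,
    integrable_gProfile_of_pos hα hq0 hq]

lemma exists_measurePreserving_inner_prod {m : ℕ} {v : EuclideanSpace ℝ (Fin (m + 1))}
    (hv : ‖v‖ = 1) :
    ∃ Ψ : EuclideanSpace ℝ (Fin (m + 1)) ≃ᵐ ℝ × EuclideanSpace ℝ (Fin m),
      MeasurePreserving Ψ ∧ ∀ x, (Ψ x).1 = ⟪x, v⟫ ∧ ‖(Ψ x).2‖ ≤ ‖x‖ := by
  obtain ⟨b, hb⟩ := Orthonormal.exists_orthonormalBasis_extension_of_card_eq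
    (𝕜 := ℝ) (ι := Fin (m + 1)) (v := fun _ => v) (s := {0}) (by simp)
    ⟨fun _ => hv, fun i j hij => (hij (Subtype.ext (i.2.trans j.2.symm))).elim⟩
  let Ψ := (b.measurableEquiv.trans (MeasurableEquiv.toLp 2 (Fin (m + 1) → ℝ)).symm).trans
    ((MeasurableEquiv.piFinSuccAbove (fun _ => ℝ) 0).trans
      (MeasurableEquiv.prodCongr (MeasurableEquiv.refl ℝ) (MeasurableEquiv.toLp 2 (Fin m → ℝ))))
  refine ⟨Ψ, ?_, fun x => ⟨?_, ?_⟩⟩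
  · refine (b.measurePreserving_measurableEquiv.trans
      (EuclideanSpace.volume_preserving_symm_measurableEquiv_toLp _)).trans ?_
    refine (measurePreserving_piFinSuccAbove (fun _ => volume) 0).trans ?_
    exact (MeasurePreserving.id volume).prod (PiLp.volume_preserving_toLp _)
  · show b.repr x 0 = _
    rw [b.repr_apply_apply, hb 0 rfl, real_inner_comm]
  · show ‖WithLp.toLp 2 (fun i : Fin m => b.repr x i.succ)‖ ≤ ‖x‖
    rw [← b.repr.norm_map x, EuclideanSpace.norm_eq, EuclideanSpace.norm_eq, Fin.sum_univ_succ]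
    gcongr
    simp [sq_nonneg]

open scoped ENNReal in
lemma setLIntegral_slab_le {m : ℕ} {f : ℝ → ℝ≥0∞} (hf : AntitoneOn f (Set.Ici 0))
    {v : EuclideanSpace ℝ (Fin (m + 1))} (hv : ‖v‖ = 1) (h : ℝ) :
    ∫⁻ x in {x | |⟪x, v⟫| ≤ h}, f ‖x‖
      ≤ ENNReal.ofReal (2 * h) * ∫⁻ y : EuclideanSpace ℝ (Fin m), f ‖y‖ := by
  obtain ⟨Ψ, hΨ, hΨx⟩ := exists_measurePreserving_inner_prod hv
  have hslab : {x | |⟪x, v⟫| ≤ h} = Ψ ⁻¹' (Set.Icc (-h) h ×ˢ Set.univ) := by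
    ext x
    simp [(hΨx x).1, abs_le]
  calc ∫⁻ x in {x | |⟪x, v⟫| ≤ h}, f ‖x‖
      ≤ ∫⁻ x in Ψ ⁻¹' (Set.Icc (-h) h ×ˢ Set.univ), f ‖(Ψ x).2‖ := by
        rw [hslab]
        exact lintegral_mono fun x => hf (norm_nonneg _) (norm_nonneg _) (hΨx x).2
    _ = ∫⁻ p : ℝ × EuclideanSpace ℝ (Fin m) in Set.Icc (-h) h ×ˢ Set.univ, f ‖p.2‖ :=
        hΨ.setLIntegral_comp_preimage_emb Ψ.measurableEmbedding (fun p => f ‖p.2‖) _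
    _ ≤ ∫⁻ _ in Set.Icc (-h) h, ∫⁻ y : EuclideanSpace ℝ (Fin m), f ‖y‖ := by
        rw [Measure.volume_eq_prod, ← Measure.prod_restrict, Measure.restrict_univ]
        exact lintegral_prod_le _
    _ = ENNReal.ofReal (2 * h) * ∫⁻ y : EuclideanSpace ℝ (Fin m), f ‖y‖ := by
        rw [setLIntegral_const, Real.volume_Icc, mul_comm, sub_neg_eq_add, two_mul]

lemma setIntegral_slab_le {m : ℕ} {f : ℝ → ℝ} (hf0 : 0 ≤ f) (hf : AntitoneOn f (Set.Ici 0))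
    (hint : Integrable fun y : EuclideanSpace ℝ (Fin m) => f ‖y‖)
    {v : EuclideanSpace ℝ (Fin (m + 1))} (hv : ‖v‖ = 1) {h : ℝ} (hh : 0 ≤ h) :
    ∫ x in {x | |⟪x, v⟫| ≤ h}, f ‖x‖ ≤ 2 * h * ∫ y : EuclideanSpace ℝ (Fin m), f ‖y‖ := by
  have hanti : AntitoneOn (fun r => ENNReal.ofReal (f r)) (Set.Ici 0) :=
    fun r hr s hs hrs => ENNReal.ofReal_le_ofReal (hf hr hs hrs)
  have hC : 0 ≤ ∫ y : EuclideanSpace ℝ (Fin m), f ‖y‖ := integral_nonneg fun y => hf0 _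
  refine (le_norm_self _).trans ((norm_integral_le_lintegral_norm _).trans
    (ENNReal.toReal_le_of_le_ofReal (by positivity) ?_))
  simp_rw [norm_of_nonneg (hf0 _)]
  calc ∫⁻ x in {x | |⟪x, v⟫| ≤ h}, ENNReal.ofReal (f ‖x‖)
      ≤ ENNReal.ofReal (2 * h) * ∫⁻ y : EuclideanSpace ℝ (Fin m), ENNReal.ofReal (f ‖y‖) :=
        setLIntegral_slab_le hanti hv h
    _ = ENNReal.ofReal (2 * h * ∫ y : EuclideanSpace ℝ (Fin m), f ‖y‖) := by
        rw [← ofReal_integral_eq_lintegral_ofReal hint (Eventually.of_forall fun y => hf0 _),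
          ← ENNReal.ofReal_mul (by positivity)]

lemma Ggen_eq_setIntegral_div (n : ℕ) (α q : ℝ) (K : Set (EuclideanSpace ℝ (Fin n))) :
    Ggen n α q K = (∫ x in K, gProfile n α q ‖x‖) / Zconst n α q := by
  rw [Ggen, div_eq_inv_mul, ← integral_const_mul]
  rfl

lemma Zconst_nonneg (n : ℕ) (α q : ℝ) : 0 ≤ Zconst n α q :=
  integral_nonneg fun _ => gProfile_nonneg ..

lemma Ggen_nonneg (n : ℕ) (α q : ℝ) (K : Set (EuclideanSpace ℝ (Fin n))) : 0 ≤ Ggen n α q K :=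
  integral_nonneg fun _ => mul_nonneg (inv_nonneg.mpr (Zconst_nonneg ..)) (gProfile_nonneg ..)

theorem generalized_gaussian_slab_estimate_general
    (n : ℕ) (α q : ℝ) (hα : 0 < α) (hq : q < α / ((n : ℝ) + α)) :
    MeasureTheory.Integrable
      (fun y : EuclideanSpace ℝ (Fin (n - 1)) => gProfile n α q ‖y‖) ∧
    ∀ v : EuclideanSpace ℝ (Fin n), ‖v‖ = 1 →
      (∀ h : ℝ, 0 < h →
        Ggen n α q {x : EuclideanSpace ℝ (Fin n) | |⟪x, v⟫| ≤ h}
          ≤ 2 * (∫ y : EuclideanSpace ℝ (Fin (n - 1)), gProfile n α q ‖y‖) * h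
              / Zconst n α q) ∧
      Filter.Tendsto
        (fun h : ℝ => Ggen n α q {x : EuclideanSpace ℝ (Fin n) | |⟪x, v⟫| ≤ h})
        (nhdsWithin 0 (Set.Ioi 0)) (nhds 0) := by
  refine ⟨integrable_gProfile hα hq (Nat.sub_le n 1), fun v hv => ?_⟩
  obtain ⟨m, rfl⟩ : ∃ m, n = m + 1 :=
    Nat.exists_eq_succ_of_ne_zero (by rintro rfl; simp [Subsingleton.elim v 0] at hv)
  have hbound : ∀ h : ℝ, 0 < h → Ggen (m + 1) α q {x | |⟪x, v⟫| ≤ h}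
      ≤ 2 * (∫ y : EuclideanSpace ℝ (Fin m), gProfile (m + 1) α q ‖y‖) * h / Zconst (m + 1) α q :=
    fun h hh => by
      rw [Ggen_eq_setIntegral_div, mul_right_comm]
      exact div_le_div_of_nonneg_right (setIntegral_slab_le (gProfile_nonneg _ α q)
        (gProfile_antitoneOn hα hq) (integrable_gProfile hα hq m.le_succ) hv hh.le)
        (Zconst_nonneg ..)
  refine ⟨hbound, tendsto_of_tendsto_of_tendsto_of_le_of_le' tendsto_const_nhds ?_
    (Eventually.of_forall fun h => Ggen_nonneg _ α q _) (eventually_mem_nhdsWithin.mono hbound)⟩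
  exact tendsto_nhdsWithin_of_tendsto_nhds (by simpa using
    ((continuous_const.mul continuous_id).div_const _).tendsto (0 : ℝ))

/-- Slab estimate. For `α > 0` and `q < α/(n+α)`, the `(n−1)`-dimensional
integral `C = ∫_{ℝ^{n−1}} gProfile n α q ‖y‖ dy` is finite, and every slab
`W = {x : |⟨x,v⟩| ≤ h}` satisfies `G_{α,q}(W) ≤ 2 C h / Z(α,q)`; in particular
`G_{α,q}(W) → 0` as `h → 0⁺`. -/
theorem generalized_gaussian_slab_estimate
    (n : ℕ) (hn : 2 ≤ n) (α q : ℝ) (hα : 0 < α) (hq : q < α / ((n : ℝ) + α)) :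
    MeasureTheory.Integrable
      (fun y : EuclideanSpace ℝ (Fin (n - 1)) => gProfile n α q ‖y‖) ∧
    ∀ v : EuclideanSpace ℝ (Fin n), ‖v‖ = 1 →
      (∀ h : ℝ, 0 < h →
        Ggen n α q {x : EuclideanSpace ℝ (Fin n) | |⟪x, v⟫| ≤ h}
          ≤ 2 * (∫ y : EuclideanSpace ℝ (Fin (n - 1)), gProfile n α q ‖y‖) * h
              / Zconst n α q) ∧
      Filter.Tendsto
        (fun h : ℝ => Ggen n α q {x : EuclideanSpace ℝ (Fin n) | |⟪x, v⟫| ≤ h})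
        (nhdsWithin 0 (Set.Ioi 0)) (nhds 0) :=
  generalized_gaussian_slab_estimate_general n α q hα hq
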